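/- arXiv:2012.10664 — 2 statements merged into one kernel-verified Lean document; each statement's English description precedes it below -/
import Mathlib

section
/- Let X be an open convex cone in ℝ^d with 0 ∈ closure(X) \ X, and let f : X → ℝ be concave, superadditive, and satisfy liminf_{x → 0, x ∈ X} f(x) ≥ 0. Then f is positively homogeneous: f(λx) = λ f(x) for all λ > 0 and x ∈ X. -/
theorem stmt_6 (d : ℕ) (X : Set (Fin d → ℝ)) (f : (Fin d → ℝ) → ℝ)
    (hopen : IsOpen X) (hconv : Convex ℝ X)
    (hcone : ∀ (l : ℝ), 0 < l → ∀ x ∈ X, l • x ∈ X)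
    (hadd : ∀ x ∈ X, ∀ y ∈ X, x + y ∈ X)
    (h0 : (0 : Fin d → ℝ) ∈ closure X \ X)
    (hconc : ConcaveOn ℝ X f)
    (hsup : ∀ x ∈ X, ∀ y ∈ X, f (x + y) ≥ f x + f y)
    (hliminf : ∀ ε : ℝ, 0 < ε → ∀ᶠ x in nhdsWithin 0 X, -ε ≤ f x) :
    ∀ l : ℝ, 0 < l → ∀ x ∈ X, f (l • x) = l * f x := by
  -- Key step 1: for 0 < l < 1, l * f x ≤ f (l • x)
  have key1 : ∀ x ∈ X, ∀ l : ℝ, 0 < l → l < 1 → l * f x ≤ f (l • x) := by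
    intro x hx l hl0 hl1
    apply le_of_forall_pos_le_add
    intro ε hε
    have htend : Filter.Tendsto (fun t : ℝ => t • x) (nhdsWithin 0 (Set.Ioi 0))
        (nhdsWithin 0 X) := by
      apply tendsto_nhdsWithin_of_tendsto_nhds_of_eventually_within
      · have h1 : Filter.Tendsto (fun t : ℝ => t • x) (nhds 0) (nhds ((0:ℝ) • x)) :=
          (continuous_id.smul continuous_const).tendsto 0
        have h2 : Filter.Tendsto (fun t : ℝ => t • x) (nhdsWithin 0 (Set.Ioi 0))
            (nhds ((0:ℝ) • x)) := h1.mono_left nhdsWithin_le_nhds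
        simpa using h2
      · filter_upwards [self_mem_nhdsWithin] with t ht
        exact hcone t ht x hx
    have hev1 := htend.eventually (hliminf (ε/2) (by linarith))
    set E : ℝ := ε / (4 * (|f x| + 1)) with hE
    have hA : (0:ℝ) ≤ |f x| := abs_nonneg _
    have hEpos : 0 < E := by positivity
    set δ : ℝ := min l (min (1/2) E) with hδ
    have hδpos : 0 < δ := lt_min hl0 (lt_min (by norm_num) hEpos)
    have hev2 : ∀ᶠ t in nhdsWithin (0:ℝ) (Set.Ioi 0), t < δ :=
      Filter.eventually_of_mem (nhdsWithin_le_nhds (Iio_mem_nhds hδpos)) (fun t ht => ht)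
    have hev3 : ∀ᶠ t in nhdsWithin (0:ℝ) (Set.Ioi 0), t ∈ Set.Ioi (0:ℝ) :=
      self_mem_nhdsWithin
    obtain ⟨t, hft, htδ, ht0⟩ := (hev1.and (hev2.and hev3)).exists
    have ht0' : (0:ℝ) < t := ht0
    have htl : t < l := htδ.trans_le (min_le_left _ _)
    have ht2 : t < 1/2 := htδ.trans_le ((min_le_right _ _).trans (min_le_left _ _))
    have htE : t ≤ E := (htδ.trans_le ((min_le_right _ _).trans (min_le_right _ _))).le
    have h1t : (0:ℝ) < 1 - t := by linarith
    set μ : ℝ := (l - t) / (1 - t) with hμ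
    have hμ0 : 0 ≤ μ := div_nonneg (by linarith) h1t.le
    have hμl : μ ≤ l := by
      rw [hμ, div_le_iff₀ h1t]
      nlinarith
    have hμ1 : μ ≤ 1 := hμl.trans hl1.le
    have hxt : t • x ∈ X := hcone t ht0' x hx
    have hco := hconc.2 hx hxt hμ0 (by linarith : (0:ℝ) ≤ 1 - μ) (by ring)
    have hcomb : μ • x + (1 - μ) • (t • x) = l • x := by
      rw [smul_smul, ← add_smul]
      congr 1
      rw [hμ]
      field_simp
      ring
    rw [hcomb] at hco
    simp only [smul_eq_mul] at hco
    have hb1 : -(ε/2) ≤ f (t • x) := hft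
    -- bound (l - μ) * |f x| ≤ ε/2
    have hlmeq : l - μ = t * (1 - l) / (1 - t) := by
      rw [hμ]; field_simp; ring
    have hlm : l - μ ≤ 2 * t := by
      rw [hlmeq, div_le_iff₀ h1t]
      nlinarith
    have hEε : E * (4 * (|f x| + 1)) = ε := by
      rw [hE]; field_simp
    have hp : t * |f x| ≤ E * |f x| := mul_le_mul_of_nonneg_right htE hA
    have hb2' : 2 * t * |f x| ≤ ε / 2 := by nlinarith
    have hb2 : (l - μ) * |f x| ≤ ε / 2 :=
      le_trans (mul_le_mul_of_nonneg_right hlm hA) hb2'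
    have habs1 : f x ≤ |f x| := le_abs_self _
    have e1 : (1 - μ) * (-(ε/2)) ≤ (1 - μ) * f (t • x) :=
      mul_le_mul_of_nonneg_left hb1 (by linarith)
    have e2 : (l - μ) * f x ≤ (l - μ) * |f x| :=
      mul_le_mul_of_nonneg_left habs1 (by linarith)
    nlinarith [mul_nonneg hμ0 hε.le]
  -- Key step 1': for 0 < l ≤ 1
  have key1' : ∀ x ∈ X, ∀ l : ℝ, 0 < l → l ≤ 1 → l * f x ≤ f (l • x) := by
    intro x hx l hl0 hl1
    rcases hl1.lt_or_eq with h | h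
    · exact key1 x hx l hl0 h
    · subst h; simp
  -- Key step 2: for all l > 0, l * f x ≤ f (l • x), by induction on ⌈l⌉
  have key2 : ∀ n : ℕ, ∀ x ∈ X, ∀ l : ℝ, 0 < l → l ≤ n → l * f x ≤ f (l • x) := by
    intro n
    induction n with
    | zero =>
      intro x hx l hl0 hln
      simp at hln
      linarith
    | succ n ih =>
      intro x hx l hl0 hln
      by_cases h : l ≤ 1
      · exact key1' x hx l hl0 h
      · push_neg at h
        have hl1 : 0 < l - 1 := by linarith
        have hln' : l - 1 ≤ n := by push_cast at hln ⊢; linarith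
        have h1 := ih x hx (l - 1) hl1 hln'
        have hmem : (l - 1) • x ∈ X := hcone _ hl1 x hx
        have hs := hsup ((l - 1) • x) hmem x hx
        have heq : (l - 1) • x + x = l • x := by
          rw [sub_smul, one_smul, sub_add_cancel]
        rw [heq] at hs
        linarith
  intro l hl0 x hx
  have hge : l * f x ≤ f (l • x) := key2 ⌈l⌉₊ x hx l hl0 (Nat.le_ceil l)
  have hxl : l • x ∈ X := hcone l hl0 x hx
  have hinv : (0:ℝ) < l⁻¹ := inv_pos.2 hl0
  have hge2 : l⁻¹ * f (l • x) ≤ f (l⁻¹ • (l • x)) :=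
    key2 ⌈l⁻¹⌉₊ (l • x) hxl l⁻¹ hinv (Nat.le_ceil _)
  rw [smul_smul, inv_mul_cancel₀ hl0.ne', one_smul] at hge2
  have h4 := mul_le_mul_of_nonneg_left hge2 hl0.le
  rw [← mul_assoc, mul_inv_cancel₀ hl0.ne', one_mul] at h4
  linarith
end

section
/- Let f : (0, ∞) → ℝ be concave, superadditive, and satisfy liminf_{x → 0⁺} f(x) ≥ 0. Then f(x) = c x for some constant c, i.e., f is linear. -/
open Set Filter Topology

/- Concavity together with `liminf_{x → 0⁺} f x ≥ 0` makes `f x / x` antitone: it is the slope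
of the chord from the origin, where `f` may be thought to take a value `≥ 0`. Superadditivity gives
`f (2x) / (2x) ≥ f x / x`, and an antitone function that does not decrease under doubling is
constant. -/

theorem ConcaveOn.antitoneOn_div_self {f : ℝ → ℝ} (hf : ConcaveOn ℝ (Ioi 0) f)
    (h0 : ∀ δ : ℝ, 0 < δ → ∀ᶠ x in 𝓝[>] 0, -δ ≤ f x) :
    AntitoneOn (fun x => f x / x) (Ioi 0) := by
  intro a ha b hb hab
  rcases hab.eq_or_lt with rfl | hab
  · exact le_rfl
  have hba : 0 < b - a := sub_pos.2 hab
  -- The chord inequality on `ε < a < b` in the limit `ε → 0⁺`, up to the error `f ε ≥ -δ`.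
  have hδ : ∀ δ : ℝ, 0 < δ → a * f b - b * f a ≤ (b - a) * δ := by
    intro δ hδ
    have hlim : Tendsto (fun ε => (a - ε) * f b - (b - ε) * f a) (𝓝[>] 0)
        (𝓝 (a * f b - b * f a)) := by
      have hcont : Continuous fun ε => (a - ε) * f b - (b - ε) * f a := by fun_prop
      simpa using tendsto_nhdsWithin_of_tendsto_nhds (hcont.tendsto 0)
    refine le_of_tendsto hlim ?_
    filter_upwards [h0 δ hδ, Ioo_mem_nhdsGT ha] with ε hfε ⟨hε, hεa⟩
    have hchord := hf.slope_anti_adjacent hε hb hεa hab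
    rw [div_le_div_iff₀ hba (sub_pos.2 hεa)] at hchord
    nlinarith
  have hle : a * f b - b * f a ≤ 0 := by
    refine le_of_forall_gt_imp_ge_of_dense fun c hc => ?_
    have := hδ (c / (b - a)) (div_pos hc hba)
    rwa [mul_div_cancel₀ _ hba.ne'] at this
  show f b / b ≤ f a / a
  rw [div_le_div_iff₀ hb ha]
  linarith

theorem AntitoneOn.eq_of_le_apply_mul {g : ℝ → ℝ} {r : ℝ} (hr : 1 < r)
    (hg : AntitoneOn g (Ioi 0)) (hgr : ∀ x : ℝ, 0 < x → g x ≤ g (r * x))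
    {x y : ℝ} (hx : 0 < x) (hy : 0 < y) : g x = g y := by
  have hr0 : 0 < r := one_pos.trans hr
  have hle : ∀ x y : ℝ, 0 < x → 0 < y → g x ≤ g y := by
    intro x y hx hy
    have hpow : ∀ n : ℕ, g x ≤ g (r ^ n * x) := by
      intro n
      induction n with
      | zero => simp
      | succ n ih =>
        calc g x ≤ g (r ^ n * x) := ih
          _ ≤ g (r * (r ^ n * x)) := hgr _ (by positivity)
          _ = g (r ^ (n + 1) * x) := by ring_nf
    obtain ⟨n, hn⟩ := pow_unbounded_of_one_lt (y / x) hr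
    rw [div_lt_iff₀ hx] at hn
    exact (hpow n).trans (hg hy (show 0 < r ^ n * x by positivity) hn.le)
  exact le_antisymm (hle x y hx hy) (hle y x hy hx)

theorem stmt_11 (f : ℝ → ℝ)
    (hconc : ConcaveOn ℝ (Set.Ioi (0 : ℝ)) f)
    (hsup : ∀ x y : ℝ, 0 < x → 0 < y → f (x + y) ≥ f x + f y)
    (hliminf : ∀ ε : ℝ, 0 < ε → ∀ᶠ x in nhdsWithin 0 (Set.Ioi (0 : ℝ)), -ε ≤ f x) :
    ∃ c : ℝ, ∀ x : ℝ, 0 < x → f x = c * x := by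
  have hdouble : ∀ x : ℝ, 0 < x → f x / x ≤ f (2 * x) / (2 * x) := by
    intro x hx
    rw [two_mul, le_div_iff₀ (by positivity), div_mul_eq_mul_div, div_le_iff₀ hx]
    nlinarith [hsup x x hx hx]
  refine ⟨f 1, fun x hx => ?_⟩
  have hconst :=
    (hconc.antitoneOn_div_self hliminf).eq_of_le_apply_mul one_lt_two hdouble hx one_pos
  rw [div_one, div_eq_iff hx.ne'] at hconst
  exact hconst
end
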